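/- For ≈_b-stable distributions μ and ν: μ ≈_b ν if and only if μ(S) = ν(S) for every equivalence class S of branching probabilistic bisimilarity on states. -/

import Mathlib

open scoped BigOperators
open Classical

namespace PBB

structure Distr (X : Type) where
  f : X → ℝ
  nonneg : ∀ x, 0 ≤ f x
  fin : (Function.support f).Finite
  sum_one : ∑ᶠ x, f x = 1

namespace Distr

variable {X : Type}

noncomputable def dirac (E : X) : Distr X where
  f := fun x => if x = E then 1 else 0
  nonneg := fun x => by by_cases h : x = E <;> simp [h]
  fin := Set.Finite.subset (Set.finite_singleton E) (by
    intro x hx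
    simp only [Function.mem_support] at hx
    by_contra h
    simp only [Set.mem_singleton_iff] at h
    simp [h] at hx)
  sum_one := by
    rw [finsum_eq_single _ E (by intro x hx; simp [hx])]
    simp

noncomputable def mix (r : ℝ) (h0 : 0 ≤ r) (h1 : r ≤ 1) (μ ν : Distr X) : Distr X where
  f := fun x => r * μ.f x + (1 - r) * ν.f x
  nonneg := fun x =>
    add_nonneg (mul_nonneg h0 (μ.nonneg x)) (mul_nonneg (by linarith) (ν.nonneg x))
  fin := Set.Finite.subset (μ.fin.union ν.fin) (by
    intro x hx
    simp only [Function.mem_support] at hx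
    by_contra h
    simp only [Set.mem_union, Function.mem_support, not_or, not_not] at h
    simp [h.1, h.2] at hx)
  sum_one := by
    have hf : (Function.support fun x => r * μ.f x).Finite :=
      Set.Finite.subset μ.fin (by
        intro x hx
        simp only [Function.mem_support] at hx ⊢
        intro h; simp [h] at hx)
    have hg : (Function.support fun x => (1 - r) * ν.f x).Finite :=
      Set.Finite.subset ν.fin (by
        intro x hx
        simp only [Function.mem_support] at hx ⊢
        intro h; simp [h] at hx)
    rw [finsum_add_distrib hf hg, ← mul_finsum _ _, ← mul_finsum _ _,
      μ.sum_one, ν.sum_one]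
    ring

end Distr

def IsMix {X : Type} (r : ℝ) (μ ν ξ : Distr X) : Prop :=
  ∀ x, ξ.f x = r * μ.f x + (1 - r) * ν.f x

def IsCombo {X I : Type} [Fintype I] (p : I → ℝ) (μs : I → Distr X) (ξ : Distr X) : Prop :=
  (∀ i, 0 ≤ p i) ∧ (∑ i, p i = 1) ∧ ∀ x, ξ.f x = ∑ i, p i * (μs i).f x

/-! ### The probabilistic process calculus -/

mutual
/-- Non-deterministic processes: `E ::= 0 | α.P | E + E`. -/
inductive PE (Act : Type) : Type where
  | zero : PE Act
  | pre : Act → PP Act → PE Act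
  | plus : PE Act → PE Act → PE Act

/-- Probabilistic processes: `P ::= ∂(E) | P ⊕_r P` with `r ∈ (0,1)`. -/
inductive PP (Act : Type) : Type where
  | dirac : PE Act → PP Act
  | pchoice : PP Act → (r : ℝ) → 0 < r → r < 1 → PP Act → PP Act
end

variable {Act : Type}

/-- The distribution `⟦P⟧` denoted by a probabilistic process. -/
noncomputable def den : PP Act → Distr (PE Act)
  | .dirac E => Distr.dirac E
  | .pchoice P r h0 h1 Q => Distr.mix r h0.le h1.le (den P) (den Q)

/-- The transition relation `E →α μ` on non-deterministic processes. -/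
inductive pstep : PE Act → Act → Distr (PE Act) → Prop where
  | pre (α : Act) (P : PP Act) : pstep (.pre α P) α (den P)
  | left {E₁ E₂ : PE Act} {α : Act} {μ : Distr (PE Act)} :
      pstep E₁ α μ → pstep (.plus E₁ E₂) α μ
  | right {E₁ E₂ : PE Act} {α : Act} {μ : Distr (PE Act)} :
      pstep E₂ α μ → pstep (.plus E₁ E₂) α μ

/-- The (combined) transition relation `μ →α μ'` on distributions. -/
def dstep (μ : Distr (PE Act)) (α : Act) (μ' : Distr (PE Act)) : Prop :=
  ∃ (I : Type) (_ : Fintype I) (p : I → ℝ) (Es : I → PE Act) (μs : I → Distr (PE Act)),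
    IsCombo p (fun i => Distr.dirac (Es i)) μ ∧ IsCombo p μs μ' ∧
    ∀ i, pstep (Es i) α (μs i)

variable (τ : Act)

/-- The partial silent step `μ →(τ) μ'`. -/
def ptau (μ μ' : Distr (PE Act)) : Prop :=
  dstep μ τ μ' ∨
  ∃ (s : ℝ) (μ₁ μ₂ μ₁' : Distr (PE Act)), 0 ≤ s ∧ s ≤ 1 ∧
    IsMix s μ₁ μ₂ μ ∧ IsMix s μ₁' μ₂ μ' ∧ dstep μ₁ τ μ₁'

/-- `μ ⟹ μ'`: the reflexive-transitive closure of `→(τ)`. -/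
def wtau : Distr (PE Act) → Distr (PE Act) → Prop :=
  Relation.ReflTransGen (ptau τ)

/-- The optional step `μ →(α) μ'`. -/
def optStep (μ : Distr (PE Act)) (α : Act) (μ' : Distr (PE Act)) : Prop :=
  dstep μ α μ' ∨ (α = τ ∧ ptau τ μ μ')

/-- Weak decomposability of a relation on distributions. -/
def WeaklyDecomposable (R : Distr (PE Act) → Distr (PE Act) → Prop) : Prop :=
  ∀ (I : Type) (_ : Fintype I) (p : I → ℝ) (μs : I → Distr (PE Act))
    (μ ν : Distr (PE Act)),
    R μ ν → IsCombo p μs μ →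
    ∃ (ν' : Distr (PE Act)) (νs : I → Distr (PE Act)),
      wtau τ ν ν' ∧ R μ ν' ∧ IsCombo p νs ν' ∧ ∀ i, R (μs i) (νs i)

/-- Decomposability of a relation on distributions. -/
def Decomposable (R : Distr (PE Act) → Distr (PE Act) → Prop) : Prop :=
  ∀ (I : Type) (_ : Fintype I) (p : I → ℝ) (μs : I → Distr (PE Act))
    (μ ν : Distr (PE Act)),
    R μ ν → IsCombo p μs μ →
    ∃ νs : I → Distr (PE Act), IsCombo p νs ν ∧ ∀ i, R (μs i) (νs i)

/-- Branching probabilistic bisimulation relations. -/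
def IsBranchingBisim (R : Distr (PE Act) → Distr (PE Act) → Prop) : Prop :=
  Symmetric R ∧ WeaklyDecomposable τ R ∧
  ∀ μ ν α μ', R μ ν → dstep μ α μ' →
    ∃ ν' ν'', wtau τ ν ν' ∧ optStep τ ν' α ν'' ∧ R μ ν' ∧ R μ' ν''

/-- Branching probabilistic bisimilarity `≈_b`. -/
def bb (μ ν : Distr (PE Act)) : Prop :=
  ∃ R, IsBranchingBisim τ R ∧ R μ ν

/-- Strong probabilistic bisimulation relations. -/
def IsStrongBisim (R : Distr (PE Act) → Distr (PE Act) → Prop) : Prop :=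
  Symmetric R ∧ Decomposable R ∧
  ∀ μ ν α μ', R μ ν → dstep μ α μ' →
    ∃ ν', dstep ν α ν' ∧ R μ' ν'

/-- Strong probabilistic bisimilarity `∼`. -/
def sb (μ ν : Distr (PE Act)) : Prop :=
  ∃ R, IsStrongBisim R ∧ R μ ν

/-- Rooted branching probabilistic bisimulation relations. -/
def IsRootedBranchingBisim (R : Distr (PE Act) → Distr (PE Act) → Prop) : Prop :=
  Symmetric R ∧ Decomposable R ∧
  ∀ μ ν α μ', R μ ν → dstep μ α μ' →
    ∃ ν', dstep ν α ν' ∧ bb τ μ' ν'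

/-- Rooted branching probabilistic bisimilarity `≈_rb`. -/
def rbb (μ ν : Distr (PE Act)) : Prop :=
  ∃ R, IsRootedBranchingBisim τ R ∧ R μ ν

/-- `≈_b`-stability of a distribution. -/
def Stable (μ : Distr (PE Act)) : Prop :=
  ∀ μ', wtau τ μ μ' → bb τ μ μ' → μ' = μ

/-- A state is rigid iff it admits no inert `τ`-transition. -/
def Rigid (E : PE Act) : Prop :=
  ¬ ∃ μ, pstep E τ μ ∧ bb τ (Distr.dirac E) μ

/-- `E ⊑ P`: every transition of `E` is matched by an optional transition of `⟦P⟧`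
with branching probabilistically bisimilar target. -/
def sq (E : PE Act) (P : PP Act) : Prop :=
  ∀ α μ, pstep E α μ → ∃ ν, optStep τ (den P) α ν ∧ bb τ μ ν




/-!
If `μ ≈_b ν`, weak decomposability along `μ = ∑ₑ μ(e) δₑ` gives a weak move
`ν ⟹ ∑ₑ μ(e) Kₑ` to a distribution bisimilar to `ν` with `δₑ ≈_b Kₑ`; stability of `ν` makes
this move trivial. Every `δₑ` with `μ(e) > 0` is stable as well, and a distribution bisimilar to a
stable Dirac distribution `δₑ` is supported in the class of `e`. Hence `ν(S) = μ(S)` for every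
class `S`.

Conversely, if `μ` and `ν` agree on all classes then `ν = ∑ₑ μ(e) ν(· | [e])`, and
`δₑ ≈_b ν(· | [e])` since the latter lives on `[e]`. Linearity of `≈_b` (the convex closure of
`≈_b` is a branching bisimulation) then gives `μ ≈_b ν`.
-/

namespace Distr

variable {X : Type}

@[ext]
theorem ext {μ ν : Distr X} (h : ∀ x, μ.f x = ν.f x) : μ = ν := by
  cases μ; cases ν
  congr
  exact funext h

theorem dirac_f (E x : X) : (dirac E).f x = if x = E then 1 else 0 := rfl

theorem support_mul_finite (μ : Distr X) (g : X → ℝ) :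
    (Function.support fun x => μ.f x * g x).Finite :=
  μ.fin.subset (Function.support_mul_subset_left _ _)

theorem finsum_dirac_mul (E : X) (g : X → ℝ) : ∑ᶠ x, (dirac E).f x * g x = g E := by
  rw [finsum_eq_single _ E fun x hx => by simp [dirac_f, hx]]
  simp [dirac_f]

theorem eq_dirac_of_forall_ne {μ : Distr X} {E : X} (h : ∀ x, x ≠ E → μ.f x = 0) :
    μ = dirac E := by
  have hE : μ.f E = 1 := by rw [← μ.sum_one, finsum_eq_single _ E h]
  ext x
  by_cases hx : x = E
  · subst hx; simp [dirac_f, hE]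
  · simp [dirac_f, hx, h x hx]

noncomputable def supp (μ : Distr X) : Finset X := μ.fin.toFinset

theorem mem_supp {μ : Distr X} {x : X} : x ∈ μ.supp ↔ μ.f x ≠ 0 := μ.fin.mem_toFinset

/-- The probability `μ(S)`. -/
noncomputable def mass (μ : Distr X) (S : Set X) : ℝ := ∑ᶠ x ∈ S, μ.f x

theorem mass_eq_finsum (μ : Distr X) (S : Set X) :
    μ.mass S = ∑ᶠ x, μ.f x * S.indicator 1 x := by
  rw [mass, finsum_mem_def]
  refine finsum_congr fun x => ?_
  by_cases hx : x ∈ S <;> simp [hx]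

theorem f_le_mass (μ : Distr X) {S : Set X} {x : X} (hx : x ∈ S) : μ.f x ≤ μ.mass S := by
  rw [mass_eq_finsum]
  have := single_le_finsum x (μ.support_mul_finite (S.indicator 1))
    (fun y => mul_nonneg (μ.nonneg y) (Set.indicator_nonneg (fun _ _ => zero_le_one) y))
  simpa [hx] using this

theorem mass_dirac (E : X) (S : Set X) : (dirac E).mass S = S.indicator 1 E := by
  rw [mass_eq_finsum, finsum_dirac_mul]

theorem mass_eq_one {μ : Distr X} {S : Set X} (h : ∀ x, μ.f x ≠ 0 → x ∈ S) : μ.mass S = 1 := by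
  rw [← μ.sum_one, mass_eq_finsum]
  refine finsum_congr fun x => ?_
  by_cases hx : μ.f x = 0
  · simp [hx]
  · simp [h x hx]

theorem mass_eq_zero {μ : Distr X} {S : Set X} (h : ∀ x ∈ S, μ.f x = 0) : μ.mass S = 0 :=
  finsum_mem_eq_zero_of_forall_eq_zero h

end Distr

section Combination

variable {X I : Type} [Fintype I]

theorem IsCombo.mul_le {p : I → ℝ} {μs : I → Distr X} {μ : Distr X} (h : IsCombo p μs μ)
    (i : I) (x : X) : p i * (μs i).f x ≤ μ.f x := by
  rw [h.2.2 x]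
  exact Finset.single_le_sum (fun j _ => mul_nonneg (h.1 j) ((μs j).nonneg x))
    (Finset.mem_univ i)

theorem IsCombo.f_ne_zero {p : I → ℝ} {μs : I → Distr X} {μ : Distr X} (h : IsCombo p μs μ)
    {i : I} (hi : p i ≠ 0) {x : X} (hx : (μs i).f x ≠ 0) : μ.f x ≠ 0 :=
  ((mul_pos ((h.1 i).lt_of_ne' hi) (((μs i).nonneg x).lt_of_ne' hx)).trans_le
    (h.mul_le i x)).ne'

theorem IsCombo.unique {p : I → ℝ} {μs : I → Distr X} {μ ν : Distr X}
    (hμ : IsCombo p μs μ) (hν : IsCombo p μs ν) : μ = ν :=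
  Distr.ext fun x => by rw [hμ.2.2 x, hν.2.2 x]

theorem IsCombo.congr {p : I → ℝ} {μs νs : I → Distr X} {μ : Distr X} (h : IsCombo p μs μ)
    (hμν : ∀ i, p i ≠ 0 → μs i = νs i) : IsCombo p νs μ := by
  refine ⟨h.1, h.2.1, fun x => (h.2.2 x).trans (Finset.sum_congr rfl fun i _ => ?_)⟩
  by_cases hi : p i = 0
  · simp [hi]
  · rw [hμν i hi]

theorem isCombo_const {p : I → ℝ} (h0 : ∀ i, 0 ≤ p i) (h1 : ∑ i, p i = 1) (μ : Distr X) :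
    IsCombo p (fun _ => μ) μ :=
  ⟨h0, h1, fun x => by rw [← Finset.sum_mul, h1, one_mul]⟩

theorem isCombo_unique (μ : Distr X) :
    IsCombo (fun _ : PUnit => (1 : ℝ)) (fun _ => μ) μ :=
  isCombo_const (fun _ => zero_le_one) (by simp) μ

theorem IsMix.isCombo {r : ℝ} {μ ν ξ : Distr X} (h : IsMix r μ ν ξ) (h0 : 0 ≤ r) (h1 : r ≤ 1) :
    IsCombo (fun b => bif b then r else 1 - r) (fun b => bif b then μ else ν) ξ :=
  ⟨fun b => by cases b <;> simp [h0, h1], by simp, fun x => by simp [h x]⟩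

theorem IsCombo.subtype_ne_zero {p : I → ℝ} {μs : I → Distr X} {μ : Distr X}
    (h : IsCombo p μs μ) :
    IsCombo (fun i : {i // p i ≠ 0} => p i) (fun i => μs i) μ := by
  have key : ∀ g : I → ℝ, (∀ i, p i = 0 → g i = 0) →
      ∑ i : {i // p i ≠ 0}, g i = ∑ i, g i := fun g hg => by
    rw [← Finset.sum_subtype (Finset.univ.filter (p · ≠ 0)) (by simp)]
    exact Finset.sum_filter_of_ne fun i _ hgi hpi => hgi (hg i hpi)
  refine ⟨fun i => h.1 i, ?_, fun x => ?_⟩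
  · rw [key p fun _ => id, h.2.1]
  · rw [key (fun i => p i * (μs i).f x) fun i hi => by simp [hi], h.2.2 x]

theorem IsCombo.sigma {p : I → ℝ} {μs : I → Distr X} {μ : Distr X} {J : I → Type}
    [∀ i, Fintype (J i)] {q : ∀ i, J i → ℝ} {νs : ∀ i, J i → Distr X}
    (h : IsCombo p μs μ) (hq : ∀ i, IsCombo (q i) (νs i) (μs i)) :
    IsCombo (fun k : Σ i, J i => p k.1 * q k.1 k.2) (fun k => νs k.1 k.2) μ := by
  refine ⟨fun k => mul_nonneg (h.1 _) ((hq _).1 _), ?_, fun x => ?_⟩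
  · simp_rw [Fintype.sum_sigma, ← Finset.mul_sum, (hq _).2.1, mul_one, h.2.1]
  · simp_rw [Fintype.sum_sigma, mul_assoc, ← Finset.mul_sum, ← (hq _).2.2 x, h.2.2 x]

theorem IsCombo.finsum_mul {p : I → ℝ} {μs : I → Distr X} {μ : Distr X}
    (h : IsCombo p μs μ) (g : X → ℝ) :
    ∑ᶠ x, μ.f x * g x = ∑ i, p i * ∑ᶠ x, (μs i).f x * g x := by
  simp_rw [h.2.2, Finset.sum_mul, mul_assoc]
  rw [finsum_sum_comm _ _ fun i _ => ?_]
  · simp_rw [mul_finsum]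
  · exact ((μs i).support_mul_finite g).subset (Function.support_mul_subset_right _ _)

theorem IsCombo.mass {p : I → ℝ} {μs : I → Distr X} {μ : Distr X}
    (h : IsCombo p μs μ) (S : Set X) : μ.mass S = ∑ i, p i * (μs i).mass S := by
  simp_rw [Distr.mass_eq_finsum, h.finsum_mul]

end Combination

namespace Distr

variable {X I : Type} [Fintype I]

noncomputable def combo (p : I → ℝ) (μs : I → Distr X) (h0 : ∀ i, 0 ≤ p i)
    (h1 : ∑ i, p i = 1) : Distr X where
  f x := ∑ i, p i * (μs i).f x
  nonneg x := Finset.sum_nonneg fun i _ => mul_nonneg (h0 i) ((μs i).nonneg x)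
  fin := (Set.finite_iUnion fun i => (μs i).fin).subset fun x hx => by
    obtain ⟨i, -, hi⟩ := Finset.exists_ne_zero_of_sum_ne_zero hx
    exact Set.mem_iUnion.2 ⟨i, right_ne_zero_of_mul hi⟩
  sum_one := by
    rw [finsum_sum_comm _ _ fun i _ => ?_]
    · simp_rw [← mul_finsum, sum_one, mul_one, h1]
    · exact (μs i).fin.subset (Function.support_mul_subset_right _ _)

theorem isCombo_combo (p : I → ℝ) (μs : I → Distr X) (h0 : ∀ i, 0 ≤ p i)
    (h1 : ∑ i, p i = 1) : IsCombo p μs (combo p μs h0 h1) :=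
  ⟨h0, h1, fun _ => rfl⟩

/-- The `w`-weighted average of `μs`, or `d` when all weights vanish. -/
noncomputable def avg (w : I → ℝ) (hw : ∀ i, 0 ≤ w i) (μs : I → Distr X) (d : Distr X) :
    Distr X :=
  if h : ∑ i, w i = 0 then d
  else combo (fun i => w i / ∑ j, w j) μs
    (fun i => div_nonneg (hw i) (Finset.sum_nonneg fun j _ => hw j))
    (by rw [← Finset.sum_div, div_self h])

theorem isCombo_avg {w : I → ℝ} (hw : ∀ i, 0 ≤ w i) (μs : I → Distr X) (d : Distr X)
    (h : ∑ i, w i ≠ 0) : IsCombo (fun i => w i / ∑ j, w j) μs (avg w hw μs d) := by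
  rw [avg, dif_neg h]
  exact isCombo_combo _ _ _ _

theorem sum_mul_avg_f {w : I → ℝ} (hw : ∀ i, 0 ≤ w i) (μs : I → Distr X) (d : Distr X)
    (x : X) : (∑ i, w i) * (avg w hw μs d).f x = ∑ i, w i * (μs i).f x := by
  by_cases h : ∑ i, w i = 0
  · have hw0 := (Finset.sum_eq_zero_iff_of_nonneg fun i _ => hw i).1 h
    simp [hw0]
  · rw [(isCombo_avg hw μs d h).2.2 x, Finset.mul_sum]
    refine Finset.sum_congr rfl fun i _ => ?_
    field_simp

noncomputable def bind (μ : Distr X) (K : X → Distr X) : Distr X :=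
  combo (fun e : μ.supp => μ.f e) (fun e => K e) (fun e => μ.nonneg e) (by
    rw [Finset.sum_coe_sort μ.supp μ.f, ← finsum_eq_sum_of_support_subset μ.f
      fun x hx => mem_supp.2 hx, μ.sum_one])

theorem isCombo_bind (μ : Distr X) (K : X → Distr X) :
    IsCombo (fun e : μ.supp => μ.f e) (fun e => K e) (μ.bind K) :=
  isCombo_combo _ _ _ _

theorem bind_f (μ : Distr X) (K : X → Distr X) (x : X) :
    (μ.bind K).f x = ∑ᶠ e, μ.f e * (K e).f x := by
  rw [finsum_eq_sum_of_support_subset _ fun e he =>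
    mem_supp.2 (left_ne_zero_of_mul (Function.mem_support.1 he))]
  exact (Finset.sum_coe_sort μ.supp fun e => μ.f e * (K e).f x)

theorem bind_dirac (μ : Distr X) : μ.bind dirac = μ := by
  ext x
  rw [bind_f, finsum_eq_single _ x fun e he => by simp [dirac_f, Ne.symm he]]
  simp [dirac_f]

theorem bind_const (μ ν : Distr X) : μ.bind (fun _ => ν) = ν :=
  have h := isCombo_bind μ fun _ => ν
  h.unique (isCombo_const h.1 h.2.1 ν)

theorem isCombo_dirac (μ : Distr X) :
    IsCombo (fun e : μ.supp => μ.f e) (fun e => dirac (e : X)) μ := by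
  simpa only [bind_dirac] using isCombo_bind μ dirac

/-- The conditional distribution `μ(· | S)`; it is `μ` when `μ(S) = 0`. -/
noncomputable def cond (μ : Distr X) (S : Set X) : Distr X :=
  avg (fun e : μ.supp => S.indicator μ.f e)
    (fun _ => Set.indicator_nonneg (fun x _ => μ.nonneg x) _) (fun e => dirac e) μ

theorem cond_f {μ : Distr X} {S : Set X} (h : μ.mass S ≠ 0) (x : X) :
    (μ.cond S).f x = S.indicator μ.f x / μ.mass S := by
  have hsum : ∑ e : μ.supp, S.indicator μ.f e = μ.mass S := by
    rw [(isCombo_dirac μ).mass S]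
    refine Finset.sum_congr rfl fun e _ => ?_
    by_cases he : (e : X) ∈ S <;> simp [he, mass_dirac]
  rw [eq_div_iff h, mul_comm, ← hsum, cond, sum_mul_avg_f]
  have := (isCombo_dirac μ).2.2 x
  by_cases hx : x ∈ S
  · simp_rw [Set.indicator_of_mem hx, this]
    refine Finset.sum_congr rfl fun e _ => ?_
    by_cases he : (e : X) = x
    · subst he; simp [dirac_f, hx]
    · simp [dirac_f, Ne.symm he]
  · rw [Set.indicator_of_notMem hx]
    refine Finset.sum_eq_zero fun e _ => ?_
    by_cases he : (e : X) = x
    · subst he; simp [hx]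
    · simp [dirac_f, Ne.symm he]

theorem bind_cond_eq {r : X → X → Prop} (hr : Equivalence r) {μ ν : Distr X}
    (h : ∀ e, μ.mass {x | r e x} = ν.mass {x | r e x}) :
    μ.bind (fun e => ν.cond {x | r e x}) = ν := by
  ext z
  set C := {x | r z x}
  have hC e (hez : r e z) : {x | r e x} = C :=
    Set.ext fun x => ⟨fun hex => hr.trans (hr.symm hez) hex, fun hzx => hr.trans hez hzx⟩
  have hterm e : μ.f e * (ν.cond {x | r e x}).f z = C.indicator μ.f e * (ν.f z / ν.mass C) := by
    by_cases he : μ.f e = 0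
    · by_cases heC : e ∈ C <;> simp [he, heC]
    have hmass : ν.mass {x | r e x} ≠ 0 := by
      rw [← h e]
      exact ((μ.nonneg e).lt_of_ne' he |>.trans_le (μ.f_le_mass (hr.refl e))).ne'
    rw [cond_f hmass]
    by_cases hez : r e z
    · rw [hC e hez, Set.indicator_of_mem (show z ∈ C from hr.refl z),
        Set.indicator_of_mem (show e ∈ C from hr.symm hez)]
    · rw [Set.indicator_of_notMem (show z ∉ {x | r e x} from hez),
        Set.indicator_of_notMem (show e ∉ C from fun hze => hez (hr.symm hze))]
      simp
  rw [bind_f, finsum_congr hterm, ← finsum_mul, ← finsum_mem_def, ← mass, h z]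
  by_cases hz : ν.mass C = 0
  · have : ν.f z = 0 := le_antisymm (hz ▸ ν.f_le_mass (hr.refl z)) (ν.nonneg z)
    simp [hz, this]
  · field_simp
    exact mul_comm _ _

end Distr

section Kernel

variable {X I : Type} [Fintype I]

theorem IsCombo.bind {p : I → ℝ} {μs : I → Distr X} {μ : Distr X} (h : IsCombo p μs μ)
    (K : X → Distr X) : IsCombo p (fun i => (μs i).bind K) (μ.bind K) :=
  ⟨h.1, h.2.1, fun x => by simp_rw [Distr.bind_f, h.finsum_mul]⟩

theorem IsCombo.exists_bind_eq {p : I → ℝ} {μs : I → Distr X} {μ : Distr X}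
    (h : IsCombo p μs μ) (K : I → X → Distr X) :
    ∃ L : X → Distr X, IsCombo p (fun i => (μs i).bind (K i)) (μ.bind L) ∧
      ∀ e, μ.f e ≠ 0 → IsCombo (fun i => p i * (μs i).f e / μ.f e) (fun i => K i e) (L e) := by
  have hw e i : 0 ≤ p i * (μs i).f e := mul_nonneg (h.1 i) ((μs i).nonneg e)
  let L e := Distr.avg (fun i => p i * (μs i).f e) (hw e) (fun i => K i e) (Distr.dirac e)
  have hL e x : μ.f e * (L e).f x = ∑ i, p i * ((μs i).f e * (K i e).f x) := by
    have := Distr.sum_mul_avg_f (hw e) (fun i => K i e) (Distr.dirac e) x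
    rw [h.2.2 e]
    simpa only [mul_assoc] using this
  refine ⟨L, ⟨h.1, h.2.1, fun x => ?_⟩, fun e he => ?_⟩
  · rw [Distr.bind_f, finsum_congr (hL · x), finsum_sum_comm _ _ fun i _ => ?_]
    · simp_rw [← mul_finsum, Distr.bind_f]
    · exact ((μs i).support_mul_finite _).subset (Function.support_mul_subset_right _ _)
  · simpa only [← h.2.2 e] using Distr.isCombo_avg (hw e) (fun i => K i e) (Distr.dirac e)
      (by rwa [← h.2.2 e])

end Kernel

def ClosedUnderCombo {X : Type} (R : Distr X → Distr X → Prop) : Prop :=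
  ∀ ⦃I : Type⦄ [Fintype I] ⦃p : I → ℝ⦄ ⦃μs νs : I → Distr X⦄ ⦃μ ν : Distr X⦄,
    IsCombo p μs μ → IsCombo p νs ν → (∀ i, R (μs i) (νs i)) → R μ ν

namespace ClosedUnderCombo

variable {X I : Type} [Fintype I] {R : Distr X → Distr X → Prop}

theorem of_ne_zero (hR : ClosedUnderCombo R) {p : I → ℝ} {μs νs : I → Distr X}
    {μ ν : Distr X} (hμ : IsCombo p μs μ) (hν : IsCombo p νs ν)
    (h : ∀ i, p i ≠ 0 → R (μs i) (νs i)) : R μ ν :=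
  hR hμ.subtype_ne_zero hν.subtype_ne_zero fun i => h i i.2

theorem bind (hR : ClosedUnderCombo R) (μ : Distr X) {K L : X → Distr X}
    (h : ∀ e, μ.f e ≠ 0 → R (K e) (L e)) : R (μ.bind K) (μ.bind L) :=
  hR (Distr.isCombo_bind μ K) (Distr.isCombo_bind μ L) fun e => h e (Distr.mem_supp.1 e.2)

theorem reflTransGen_update (hrefl : ∀ μ, R μ μ) (hR : ClosedUnderCombo R) {p : I → ℝ}
    (h0 : ∀ i, 0 ≤ p i) (h1 : ∑ i, p i = 1) (μs : I → Distr X) (i : I) {ν : Distr X}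
    (h : Relation.ReflTransGen R (μs i) ν) :
    Relation.ReflTransGen R (Distr.combo p μs h0 h1)
      (Distr.combo p (Function.update μs i ν) h0 h1) := by
  induction h with
  | refl => rw [Function.update_eq_self]
  | tail _ hstep ih =>
    refine ih.tail (hR (Distr.isCombo_combo _ _ _ _) (Distr.isCombo_combo _ _ _ _) fun j => ?_)
    by_cases hj : j = i
    · subst hj
      simpa using hstep
    · simpa [Function.update_of_ne hj] using hrefl _

/-- Components are moved to their targets one index at a time. -/
theorem reflTransGen (hrefl : ∀ μ, R μ μ) (hR : ClosedUnderCombo R) :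
    ClosedUnderCombo (Relation.ReflTransGen R) := by
  intro I _ p μs νs μ ν hμ hν h
  have key (t : Finset I) : Relation.ReflTransGen R μ
      (Distr.combo p (fun i => if i ∈ t then νs i else μs i) hμ.1 hμ.2.1) := by
    induction t using Finset.induction_on with
    | empty =>
      convert Relation.ReflTransGen.refl
      exact (hμ.unique (by simpa using Distr.isCombo_combo p μs hμ.1 hμ.2.1)).symm
    | @insert a t ha ih =>
      refine ih.trans ?_
      convert reflTransGen_update hrefl hR hμ.1 hμ.2.1
        (fun i => if i ∈ t then νs i else μs i) a (by simpa [ha] using h a) using 2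
      funext i
      by_cases hi : i = a <;> simp [hi]
  rw [hν.unique (by simpa using Distr.isCombo_combo p νs hμ.1 hμ.2.1)]
  simpa using key Finset.univ

end ClosedUnderCombo

section Steps

variable {Act : Type} (τ : Act)

theorem dstep_dirac {E : PE Act} {α : Act} {μ : Distr (PE Act)} (h : pstep E α μ) :
    dstep (Distr.dirac E) α μ :=
  ⟨PUnit, inferInstance, _, fun _ => E, fun _ => μ, isCombo_unique _, isCombo_unique _,
    fun _ => h⟩

theorem dstep_closedUnderCombo (α : Act) :
    ClosedUnderCombo fun μ μ' : Distr (PE Act) => dstep μ α μ' := by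
  intro I _ p μs νs μ ν hμ hν h
  choose J _ q Es ρs hE hρ hstep using h
  exact ⟨Σ i, J i, inferInstance, _, fun k => Es k.1 k.2, fun k => ρs k.1 k.2, hμ.sigma hE,
    hν.sigma hρ, fun k => hstep k.1 k.2⟩

theorem dstep.exists_bind {μ μ' : Distr (PE Act)} {α : Act} (h : dstep μ α μ') :
    ∃ K : PE Act → Distr (PE Act),
      μ' = μ.bind K ∧ ∀ e, μ.f e ≠ 0 → dstep (Distr.dirac e) α (K e) := by
  obtain ⟨J, _, q, Es, κs, hE, hκ, hstep⟩ := h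
  have hw e j : 0 ≤ if Es j = e then q j else 0 := by
    split_ifs
    exacts [hE.1 j, le_rfl]
  have hsum e : ∑ j, (if Es j = e then q j else 0) = μ.f e := by
    rw [hE.2.2 e]
    refine Finset.sum_congr rfl fun j _ => ?_
    by_cases hj : Es j = e <;> simp [Distr.dirac_f, hj, Ne.symm]
  let K e := Distr.avg (fun j => if Es j = e then q j else 0) (hw e) κs (Distr.dirac e)
  refine ⟨K, Distr.ext fun x => ?_, fun e he => ?_⟩
  · have hK e : μ.f e * (K e).f x = ∑ j, if Es j = e then q j * (κs j).f x else 0 := by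
      rw [← hsum e, Distr.sum_mul_avg_f]
      simp_rw [ite_mul, zero_mul]
    rw [hκ.2.2 x, Distr.bind_f, finsum_congr hK, finsum_sum_comm _ _ fun j _ => ?_]
    · refine Finset.sum_congr rfl fun j _ => ?_
      rw [finsum_eq_single _ (Es j) fun e he => if_neg (Ne.symm he), if_pos rfl]
    · exact (Set.finite_singleton (Es j)).subset fun e he => by
        by_contra hne
        exact he (if_neg fun h => hne h.symm)
  · have hc := Distr.isCombo_avg (hw e) κs (Distr.dirac e) (by rwa [hsum])
    refine ⟨J, inferInstance, _, Es, κs, (isCombo_const hc.1 hc.2.1 _).congr fun j hj => ?_, hc,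
      hstep⟩
    by_cases hj' : Es j = e
    · rw [hj']
    · simp [hj'] at hj

theorem dstep_split {I : Type} [Fintype I] {p : I → ℝ} {μs : I → Distr (PE Act)}
    {μ μ' : Distr (PE Act)} {α : Act} (hc : IsCombo p μs μ) (hd : dstep μ α μ') :
    ∃ μs' : I → Distr (PE Act), IsCombo p μs' μ' ∧ ∀ i, p i ≠ 0 → dstep (μs i) α (μs' i) := by
  obtain ⟨K, rfl, hK⟩ := hd.exists_bind
  refine ⟨fun i => (μs i).bind K, hc.bind K, fun i hi => ?_⟩
  have := (dstep_closedUnderCombo α).bind (μs i) (K := Distr.dirac) (L := K)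
    fun e he => hK e (hc.f_ne_zero hi he)
  rwa [Distr.bind_dirac] at this

/-- A partial step of weight `0`, borrowing the `τ`-transition of `τ.0`. -/
theorem ptau_refl (μ : Distr (PE Act)) : ptau τ μ μ :=
  Or.inr ⟨0, Distr.dirac (.pre τ (.dirac .zero)), μ, den (.dirac .zero), le_rfl, zero_le_one,
    fun x => by ring, fun x => by ring, dstep_dirac (pstep.pre τ _)⟩

theorem ptau.exists_mix {μ μ' : Distr (PE Act)} (h : ptau τ μ μ') :
    ∃ (s : ℝ) (μ₁ μ₂ μ₁' : Distr (PE Act)), 0 ≤ s ∧ s ≤ 1 ∧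
      IsMix s μ₁ μ₂ μ ∧ IsMix s μ₁' μ₂ μ' ∧ dstep μ₁ τ μ₁' := by
  rcases h with hd | h
  · exact ⟨1, μ, μ, μ', zero_le_one, le_rfl, fun x => by ring, fun x => by ring, hd⟩
  · exact h

theorem ptau_closedUnderCombo : ClosedUnderCombo (ptau τ) := by
  intro I _ p μs νs μ ν hμ hν h
  choose s a b a' hs0 hs1 hm hm' hd using fun i => (h i).exists_mix
  have hw i : 0 ≤ p i * s i := mul_nonneg (hμ.1 i) (hs0 i)
  have hv i : 0 ≤ p i * (1 - s i) := mul_nonneg (hμ.1 i) (sub_nonneg.2 (hs1 i))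
  have hvsum : ∑ i, p i * (1 - s i) = 1 - ∑ i, p i * s i := by
    simp_rw [mul_sub, mul_one, Finset.sum_sub_distrib, hμ.2.1]
  have hmix {κs : I → Distr (PE Act)} {κ : Distr (PE Act)} (hκ : IsCombo p κs κ)
      (c : I → Distr (PE Act)) (d : Distr (PE Act)) (hc : ∀ i, IsMix (s i) (c i) (b i) (κs i)) :
      IsMix (∑ i, p i * s i) (Distr.avg _ hw c d) (Distr.avg _ hv b μ) κ := fun x => by
    rw [Distr.sum_mul_avg_f, ← hvsum, Distr.sum_mul_avg_f, hκ.2.2 x, ← Finset.sum_add_distrib]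
    exact Finset.sum_congr rfl fun i _ => by rw [hc i x]; ring
  -- The moving parts `a i` and the idle parts `b i` are averaged separately; when no weight
  -- moves, the step of `τ.0` stands in for the moving part.
  refine Or.inr ⟨_, _, _, _, Finset.sum_nonneg fun i _ => hw i, ?_,
    hmix hμ a (Distr.dirac (.pre τ (.dirac .zero))) hm, hmix hν a' (den (.dirac .zero)) hm', ?_⟩
  · calc ∑ i, p i * s i ≤ ∑ i, p i :=
          Finset.sum_le_sum fun i _ => mul_le_of_le_one_right (hμ.1 i) (hs1 i)
      _ = 1 := hμ.2.1
  · by_cases hS : ∑ i, p i * s i = 0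
    · simp only [Distr.avg, dif_pos hS]
      exact dstep_dirac (pstep.pre τ _)
    · exact dstep_closedUnderCombo τ (Distr.isCombo_avg hw a _ hS) (Distr.isCombo_avg hw a' _ hS) hd

theorem wtau_closedUnderCombo : ClosedUnderCombo (wtau τ) :=
  ClosedUnderCombo.reflTransGen (ptau_refl τ) (ptau_closedUnderCombo τ)

theorem optStep.ptau {μ μ' : Distr (PE Act)} (h : optStep τ μ τ μ') : ptau τ μ μ' :=
  h.elim Or.inl And.right

theorem optStep_closedUnderCombo (α : Act) :
    ClosedUnderCombo fun μ μ' : Distr (PE Act) => optStep τ μ α μ' := by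
  intro I _ p μs νs μ ν hμ hν h
  by_cases hα : α = τ
  · subst hα
    exact Or.inr ⟨rfl, ptau_closedUnderCombo α hμ hν fun i => (h i).ptau⟩
  · exact Or.inl (dstep_closedUnderCombo α hμ hν fun i => (h i).resolve_right fun h' => hα h'.1)

end Steps

def comboClosure {X : Type} (R : Distr X → Distr X → Prop) (μ ν : Distr X) : Prop :=
  ∃ (I : Type) (_ : Fintype I) (p : I → ℝ) (μs νs : I → Distr X),
    IsCombo p μs μ ∧ IsCombo p νs ν ∧ ∀ i, R (μs i) (νs i)

section ComboClosure

variable {X : Type} {R : Distr X → Distr X → Prop}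

theorem comboClosure_of_rel {μ ν : Distr X} (h : R μ ν) : comboClosure R μ ν :=
  ⟨PUnit, inferInstance, _, _, _, isCombo_unique μ, isCombo_unique ν, fun _ => h⟩

theorem comboClosure_closedUnderCombo : ClosedUnderCombo (comboClosure R) := by
  intro I _ p μs νs μ ν hμ hν h
  choose J _ q μss νss hμs hνs hR using h
  exact ⟨Σ i, J i, inferInstance, _, _, _, hμ.sigma hμs, hν.sigma hνs, fun k => hR k.1 k.2⟩

theorem comboClosure_symmetric (hR : Symmetric R) : Symmetric (comboClosure R) :=
  fun _ _ ⟨I, hI, p, μs, νs, hμ, hν, h⟩ => ⟨I, hI, p, νs, μs, hν, hμ, fun i => hR (h i)⟩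

end ComboClosure

section Bisimilarity

variable {Act : Type} (τ : Act)

theorem bb_isBranchingBisim : IsBranchingBisim τ (bb τ) := by
  refine ⟨fun μ ν ⟨R, hR, h⟩ => ⟨R, hR, hR.1 h⟩, ?_, ?_⟩
  · rintro I _ p μs μ ν ⟨R, hR, h⟩ hc
    obtain ⟨ν', νs, hw, h', hc', hνs⟩ := hR.2.1 I _ p μs μ ν h hc
    exact ⟨ν', νs, hw, ⟨R, hR, h'⟩, hc', fun i => ⟨R, hR, hνs i⟩⟩
  · rintro μ ν α μ' ⟨R, hR, h⟩ hd
    obtain ⟨ν', ν'', hw, hopt, h', h''⟩ := hR.2.2 μ ν α μ' h hd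
    exact ⟨ν', ν'', hw, hopt, ⟨R, hR, h'⟩, ⟨R, hR, h''⟩⟩

theorem bb_refl (μ : Distr (PE Act)) : bb τ μ μ := by
  refine ⟨Eq, ⟨fun _ _ h => h.symm, ?_, ?_⟩, rfl⟩
  · rintro I _ p μs μ _ rfl hc
    exact ⟨μ, μs, .refl, rfl, hc, fun _ => rfl⟩
  · rintro μ _ α μ' rfl hd
    exact ⟨μ, μ', .refl, Or.inl hd, rfl, rfl⟩

theorem bb_symm {μ ν : Distr (PE Act)} (h : bb τ μ ν) : bb τ ν μ :=
  (bb_isBranchingBisim τ).1 h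

theorem weaklyDecomposable_of_ne_zero {R : Distr (PE Act) → Distr (PE Act) → Prop}
    (hrefl : ∀ μ, R μ μ)
    (h : ∀ (I : Type) (_ : Fintype I) (p : I → ℝ) (μs : I → Distr (PE Act))
      (μ ν : Distr (PE Act)), R μ ν → IsCombo p μs μ →
      ∃ (ν' : Distr (PE Act)) (νs : I → Distr (PE Act)), wtau τ ν ν' ∧ R μ ν' ∧
        IsCombo p νs ν' ∧ ∀ i, p i ≠ 0 → R (μs i) (νs i)) :
    WeaklyDecomposable τ R := by
  intro I _ p μs μ ν hR hc
  obtain ⟨ν', νs, hw, hR', hc', hνs⟩ := h I _ p μs μ ν hR hc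
  refine ⟨ν', fun i => if p i = 0 then μs i else νs i, hw, hR', hc'.congr fun i hi => by simp [hi],
    fun i => ?_⟩
  by_cases hi : p i = 0
  · simpa [hi] using hrefl _
  · simpa [hi] using hνs i hi

theorem bb.exists_bind {μ ν : Distr (PE Act)} (h : bb τ μ ν) :
    ∃ K : PE Act → Distr (PE Act), wtau τ ν (μ.bind K) ∧ bb τ μ (μ.bind K) ∧
      ∀ e, μ.f e ≠ 0 → bb τ (Distr.dirac e) (K e) := by
  obtain ⟨ν', ks, hw, hb, hc, hks⟩ :=
    (bb_isBranchingBisim τ).2.1 _ inferInstance _ _ μ ν h (Distr.isCombo_dirac μ)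
  let K e := if he : e ∈ μ.supp then ks ⟨e, he⟩ else Distr.dirac e
  have hK : ν' = μ.bind K := hc.unique (by simpa [K] using Distr.isCombo_bind μ K)
  refine ⟨K, hK ▸ hw, hK ▸ hb, fun e he => ?_⟩
  simpa [K, Distr.mem_supp.2 he] using hks ⟨e, Distr.mem_supp.2 he⟩

theorem comboClosure_bb_weaklyDecomposable : WeaklyDecomposable τ (comboClosure (bb τ)) := by
  refine weaklyDecomposable_of_ne_zero τ (fun μ => comboClosure_of_rel (bb_refl τ μ)) ?_
  rintro J _ q ξs μ ν ⟨I, _, p, μs, νs, hμ, hν, hb⟩ hξ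
  -- Match each `μs i` state by state, then decompose along `ξs` via the posterior mixture `L`.
  choose K hw hb' hK using fun i => (hb i).exists_bind
  obtain ⟨L, hL, hLe⟩ := hμ.exists_bind_eq K
  refine ⟨μ.bind L, fun j => (ξs j).bind L, wtau_closedUnderCombo τ hν hL hw,
    ⟨I, inferInstance, p, μs, _, hμ, hL, hb'⟩, hξ.bind L, fun j hj => ?_⟩
  have := comboClosure_closedUnderCombo.bind (ξs j) (K := Distr.dirac) (L := L) fun e he => by
    have hc := hLe e (hξ.f_ne_zero hj he)
    refine comboClosure_closedUnderCombo.of_ne_zero (isCombo_const hc.1 hc.2.1 _) hc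
      fun i hi => comboClosure_of_rel (hK i e fun h0 => hi ?_)
    simp [h0]
  rwa [Distr.bind_dirac] at this

theorem comboClosure_bb_transfer (μ ν : Distr (PE Act)) (α : Act) (μ' : Distr (PE Act))
    (h : comboClosure (bb τ) μ ν) (hd : dstep μ α μ') :
    ∃ ν' ν'', wtau τ ν ν' ∧ optStep τ ν' α ν'' ∧
      comboClosure (bb τ) μ ν' ∧ comboClosure (bb τ) μ' ν'' := by
  obtain ⟨I, _, p, μs, νs, hμ, hν, hb⟩ := h
  obtain ⟨μs', hμ', hd'⟩ := dstep_split hμ hd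
  have key i : ∃ ν' ν'', wtau τ (νs i) ν' ∧
      (p i ≠ 0 → optStep τ ν' α ν'' ∧ bb τ (μs i) ν' ∧ bb τ (μs' i) ν'') := by
    by_cases hi : p i = 0
    · exact ⟨νs i, νs i, .refl, fun h => (h hi).elim⟩
    · obtain ⟨ν', ν'', hw, hopt, h', h''⟩ := (bb_isBranchingBisim τ).2.2 _ _ α _ (hb i) (hd' i hi)
      exact ⟨ν', ν'', hw, fun _ => ⟨hopt, h', h''⟩⟩
  choose ν' ν'' hw hrest using key
  have hc' := Distr.isCombo_combo p ν' hμ.1 hμ.2.1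
  have hc'' := Distr.isCombo_combo p ν'' hμ.1 hμ.2.1
  exact ⟨_, _, wtau_closedUnderCombo τ hν hc' hw,
    (optStep_closedUnderCombo τ α).of_ne_zero hc' hc'' fun i hi => (hrest i hi).1,
    comboClosure_closedUnderCombo.of_ne_zero hμ hc'
      fun i hi => comboClosure_of_rel (hrest i hi).2.1,
    comboClosure_closedUnderCombo.of_ne_zero hμ' hc''
      fun i hi => comboClosure_of_rel (hrest i hi).2.2⟩

theorem bb_closedUnderCombo : ClosedUnderCombo (bb τ) := fun I _ p μs νs _ _ hμ hν h =>
  ⟨comboClosure (bb τ),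
    ⟨comboClosure_symmetric (bb_isBranchingBisim τ).1, comboClosure_bb_weaklyDecomposable τ,
      comboClosure_bb_transfer τ⟩,
    I, inferInstance, p, μs, νs, hμ, hν, h⟩

theorem bb_match_ptau {x y x' : Distr (PE Act)} (h : bb τ x y) (hp : ptau τ x x') :
    ∃ y' y'', wtau τ y y' ∧ ptau τ y' y'' ∧ bb τ x y' ∧ bb τ x' y'' := by
  obtain ⟨s, x₁, x₂, x₁', hs0, hs1, hm, hm', hd⟩ := hp.exists_mix
  have hc := hm.isCombo hs0 hs1
  obtain ⟨y₀, ys, hw₀, -, hc₀, hys⟩ := (bb_isBranchingBisim τ).2.1 _ inferInstance _ _ x y h hc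
  obtain ⟨y₁', y₁'', hw₁, hopt, hb₁, hb₁'⟩ := (bb_isBranchingBisim τ).2.2 x₁ _ τ x₁' (hys true) hd
  have hc' := Distr.isCombo_combo _ (fun b => bif b then y₁' else ys false) hc.1 hc.2.1
  have hc'' := Distr.isCombo_combo _ (fun b => bif b then y₁'' else ys false) hc.1 hc.2.1
  exact ⟨_, _, hw₀.trans (wtau_closedUnderCombo τ hc₀ hc' (Bool.forall_bool.2 ⟨.refl, hw₁⟩)),
    ptau_closedUnderCombo τ hc' hc'' (Bool.forall_bool.2 ⟨ptau_refl τ _, hopt.ptau⟩),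
    bb_closedUnderCombo τ hc hc' (Bool.forall_bool.2 ⟨hys false, hb₁⟩),
    bb_closedUnderCombo τ (hm'.isCombo hs0 hs1) hc'' (Bool.forall_bool.2 ⟨hys false, hb₁'⟩)⟩

theorem bb_match_wtau {x y x' : Distr (PE Act)} (h : bb τ x y) (hw : wtau τ x x') :
    ∃ y', wtau τ y y' ∧ bb τ x' y' := by
  induction hw with
  | refl => exact ⟨y, .refl, h⟩
  | tail _ hp ih =>
    obtain ⟨y₁, hw₁, hb₁⟩ := ih
    obtain ⟨y', y'', hw', hp', -, hb''⟩ := bb_match_ptau τ hb₁ hp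
    exact ⟨y'', (hw₁.trans hw').tail hp', hb''⟩

theorem bb_trans {x y z : Distr (PE Act)} (hxy : bb τ x y) (hyz : bb τ y z) : bb τ x z := by
  refine ⟨fun a c => ∃ b, bb τ a b ∧ bb τ b c, ⟨?_, ?_, ?_⟩, y, hxy, hyz⟩
  · rintro a c ⟨b, hab, hbc⟩
    exact ⟨b, bb_symm τ hbc, bb_symm τ hab⟩
  · rintro I _ p μs μ ν ⟨b, hμb, hbν⟩ hc
    obtain ⟨b', bs, hwb, hμb', hcb, hbs⟩ := (bb_isBranchingBisim τ).2.1 I _ p μs μ b hμb hc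
    obtain ⟨ν₀, hw₀, hb'ν₀⟩ := bb_match_wtau τ hbν hwb
    obtain ⟨ν₁, νs, hw₁, hb'ν₁, hcν, hbsν⟩ :=
      (bb_isBranchingBisim τ).2.1 I _ p bs b' ν₀ hb'ν₀ hcb
    exact ⟨ν₁, νs, hw₀.trans hw₁, ⟨b', hμb', hb'ν₁⟩, hcν, fun i => ⟨bs i, hbs i, hbsν i⟩⟩
  · rintro μ ν α μ' ⟨b, hμb, hbν⟩ hd
    obtain ⟨b₁, b₂, hwb, hopt, hμb₁, hμ'b₂⟩ := (bb_isBranchingBisim τ).2.2 μ b α μ' hμb hd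
    obtain ⟨ν₁, hw₁, hb₁ν₁⟩ := bb_match_wtau τ hbν hwb
    rcases hopt with hdb | ⟨hα, hpb⟩
    · obtain ⟨ν₂, ν₃, hw₂, hopt₂, hb₁ν₂, hb₂ν₃⟩ :=
        (bb_isBranchingBisim τ).2.2 b₁ ν₁ α b₂ hb₁ν₁ hdb
      exact ⟨ν₂, ν₃, hw₁.trans hw₂, hopt₂, ⟨b₁, hμb₁, hb₁ν₂⟩, ⟨b₂, hμ'b₂, hb₂ν₃⟩⟩
    · obtain ⟨ν₂, ν₃, hw₂, hp₂, hb₁ν₂, hb₂ν₃⟩ := bb_match_ptau τ hb₁ν₁ hpb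
      exact ⟨ν₂, ν₃, hw₁.trans hw₂, Or.inr ⟨hα, hp₂⟩, ⟨b₁, hμb₁, hb₁ν₂⟩, ⟨b₂, hμ'b₂, hb₂ν₃⟩⟩

end Bisimilarity

theorem IsCombo.eq_dirac {X I : Type} [Fintype I] {p : I → ℝ} {μs : I → Distr X} {E : X}
    (h : IsCombo p μs (Distr.dirac E)) {i : I} (hi : p i ≠ 0) : μs i = Distr.dirac E :=
  Distr.eq_dirac_of_forall_ne fun x hx => by
    by_contra hne
    exact h.f_ne_zero hi hne (by simp [Distr.dirac_f, hx])

section Classes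

variable {Act : Type} (τ : Act)

def bbClass (E : PE Act) : Set (PE Act) := {F | bb τ (Distr.dirac E) (Distr.dirac F)}

theorem bb_dirac_equivalence :
    Equivalence fun E F : PE Act => bb τ (Distr.dirac E) (Distr.dirac F) :=
  ⟨fun _ => bb_refl τ _, bb_symm τ, bb_trans τ⟩

theorem bb_dirac_of_forall {E : PE Act} {κ : Distr (PE Act)}
    (h : ∀ F, κ.f F ≠ 0 → bb τ (Distr.dirac E) (Distr.dirac F)) : bb τ (Distr.dirac E) κ := by
  have := (bb_closedUnderCombo τ).bind κ (K := fun _ => Distr.dirac E) (L := Distr.dirac) h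
  rwa [Distr.bind_const, Distr.bind_dirac] at this

/-- Replacing the component `μs i` by an inert successor yields a weak move of `μ` that
stability forbids. -/
theorem Stable.of_isCombo {I : Type} [Fintype I] {p : I → ℝ} {μs : I → Distr (PE Act)}
    {μ : Distr (PE Act)} (hs : Stable τ μ) (hc : IsCombo p μs μ) {i : I} (hi : p i ≠ 0) :
    Stable τ (μs i) := by
  intro ξ hw hb
  have hupd {R : Distr (PE Act) → Distr (PE Act) → Prop} (hrefl : ∀ μ, R μ μ)
      (hR : ClosedUnderCombo R) (h : R (μs i) ξ) :
      R μ (Distr.combo p (Function.update μs i ξ) hc.1 hc.2.1) :=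
    hR hc (Distr.isCombo_combo _ _ _ _) fun j => by
      by_cases hj : j = i
      · subst hj
        simpa using h
      · simpa [Function.update_of_ne hj] using hrefl _
  have heq := hs _ (hupd (fun _ => .refl) (wtau_closedUnderCombo τ) hw)
    (hupd (bb_refl τ) (bb_closedUnderCombo τ) hb)
  ext x
  have hx := congrArg (fun ν : Distr (PE Act) => ν.f x) heq
  simp only [Distr.combo, hc.2.2 x] at hx
  have hrest : ∑ j ∈ {i}ᶜ, p j * (Function.update μs i ξ j).f x = ∑ j ∈ {i}ᶜ, p j * (μs j).f x :=
    Finset.sum_congr rfl fun j hj => by rw [Function.update_of_ne (by simpa using hj)]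
  rw [Fintype.sum_eq_add_sum_compl i, Fintype.sum_eq_add_sum_compl i, hrest,
    Function.update_self] at hx
  exact mul_left_cancel₀ hi (add_right_cancel hx)

theorem Stable.bb_dirac_of_bb {E : PE Act} {κ : Distr (PE Act)} (hs : Stable τ (Distr.dirac E))
    (h : bb τ (Distr.dirac E) κ) {F : PE Act} (hF : κ.f F ≠ 0) :
    bb τ (Distr.dirac E) (Distr.dirac F) := by
  obtain ⟨K, hw, hb, hK⟩ := (bb_symm τ h).exists_bind
  have hc := Distr.isCombo_bind κ K
  rw [hs _ hw (bb_trans τ h hb)] at hc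
  have hKF : K F = Distr.dirac E := hc.eq_dirac (i := ⟨F, Distr.mem_supp.2 hF⟩) hF
  exact bb_symm τ (hKF ▸ hK F hF)

theorem mass_bbClass_eq_of_bb {μ ν : Distr (PE Act)} (hμ : Stable τ μ) (hν : Stable τ ν)
    (h : bb τ μ ν) (E : PE Act) : μ.mass (bbClass τ E) = ν.mass (bbClass τ E) := by
  obtain ⟨K, hw, hb, hK⟩ := h.exists_bind
  rw [← hν _ hw (bb_trans τ (bb_symm τ h) hb), (Distr.isCombo_bind μ K).mass,
    (Distr.isCombo_dirac μ).mass]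
  refine Finset.sum_congr rfl fun e _ => congrArg _ ?_
  have he := Distr.mem_supp.1 e.2
  have hKe F (hF : (K e).f F ≠ 0) : bb τ (Distr.dirac e) (Distr.dirac F) :=
    (hμ.of_isCombo τ (Distr.isCombo_dirac μ) he).bb_dirac_of_bb τ (hK e he) hF
  rw [Distr.mass_dirac]
  by_cases heE : (e : PE Act) ∈ bbClass τ E
  · rw [Set.indicator_of_mem heE, Pi.one_apply,
      Distr.mass_eq_one (S := bbClass τ E) fun F hF => bb_trans τ heE (hKe F hF)]
  · rw [Set.indicator_of_notMem heE, Distr.mass_eq_zero (S := bbClass τ E) fun F hF => ?_]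
    by_contra hne
    exact heE (bb_trans τ hF (bb_symm τ (hKe F hne)))

theorem bb_of_mass_bbClass_eq {μ ν : Distr (PE Act)}
    (h : ∀ E, μ.mass (bbClass τ E) = ν.mass (bbClass τ E)) : bb τ μ ν := by
  rw [← Distr.bind_cond_eq (bb_dirac_equivalence τ) h]
  have := (bb_closedUnderCombo τ).bind μ (K := Distr.dirac) fun e he =>
    bb_dirac_of_forall τ fun F hF => by
      have hmass : ν.mass (bbClass τ e) ≠ 0 := by
        rw [← h e]
        exact ((μ.nonneg e).lt_of_ne' he |>.trans_le (μ.f_le_mass (bb_refl τ _))).ne'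
      by_contra hne
      exact hF (by rw [Distr.cond_f hmass, Set.indicator_of_notMem (s := bbClass τ e) hne,
        zero_div])
  rwa [Distr.bind_dirac] at this

end Classes

/-- For `≈_b`-stable distributions, branching probabilistic bisimilarity holds iff
the distributions assign the same probability to each `≈_b`-equivalence class of states. -/
theorem statement4 {Act : Type} (τ : Act) {μ ν : Distr (PE Act)}
    (hμ : Stable τ μ) (hν : Stable τ ν) :
    bb τ μ ν ↔ ∀ E : PE Act,
      (∑ᶠ F ∈ {F | bb τ (Distr.dirac E) (Distr.dirac F)}, μ.f F) =
      (∑ᶠ F ∈ {F | bb τ (Distr.dirac E) (Distr.dirac F)}, ν.f F) :=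
  ⟨mass_bbClass_eq_of_bb τ hμ hν, bb_of_mass_bbClass_eq τ⟩

end PBB
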